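/- In the 2-category F(X,h) constructed from an L-algebra (X,h), left whiskering computes as substitution: the horizontal composite id_N ∘ α, defined as h((h N)⟨η(α)⟩), equals h(N[η(α)]). -/
import Mathlib


/-! Syntax of the 2-λ-calculus over a 2-signature, following
"Cartesian closed 2-categories and permutation equivalence in
higher-order rewriting". -/

/-- Simple types over a set `S` of sorts: `A ::= s | 1 | A × B | B^A`
(`arr A B` denotes `B^A`). -/
inductive Ty (S : Type) : Type
  | base (s : S)
  | unit
  | prod (A B : Ty S)
  | arr (A B : Ty S)

/-- A 1-signature over a fixed set `S` of sorts: operations with arities. -/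
structure Sig1 (S : Type) : Type 1 where
  Op : Type
  opCtx : Op → List (Ty S)
  opTy : Op → Ty S

variable {S : Type}

/-- Raw λ-terms (de Bruijn indices) over a 1-signature.  Constant
application `const c args` applies an operation to a tuple of terms
(indices `≥ arity` are ignored by the typing rules). -/
inductive Tm (Sg : Sig1 S) : Type
  | var (n : ℕ)
  | unit
  | pair (M N : Tm Sg)
  | fst (M : Tm Sg)
  | snd (M : Tm Sg)
  | lam (A : Ty S) (M : Tm Sg)
  | app (M N : Tm Sg)
  | const (c : Sg.Op) (args : ℕ → Tm Sg)

namespace Tm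

variable {Sg : Sig1 S}

/-- Lift a renaming under a binder. -/
def liftRen (f : ℕ → ℕ) : ℕ → ℕ
  | 0 => 0
  | n + 1 => f n + 1

/-- Renaming of variables. -/
def ren (f : ℕ → ℕ) : Tm Sg → Tm Sg
  | var n => var (f n)
  | unit => unit
  | pair M N => pair (M.ren f) (N.ren f)
  | fst M => fst (M.ren f)
  | snd M => snd (M.ren f)
  | lam A M => lam A (M.ren (liftRen f))
  | app M N => app (M.ren f) (N.ren f)
  | const c a => const c (fun i => (a i).ren f)

/-- Lift a simultaneous substitution under a binder. -/
def liftSub (σ : ℕ → Tm Sg) : ℕ → Tm Sg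
  | 0 => var 0
  | n + 1 => (σ n).ren Nat.succ

/-- Simultaneous substitution. -/
def sub (σ : ℕ → Tm Sg) : Tm Sg → Tm Sg
  | var n => σ n
  | unit => unit
  | pair M N => pair (M.sub σ) (N.sub σ)
  | fst M => fst (M.sub σ)
  | snd M => snd (M.sub σ)
  | lam A M => lam A (M.sub (liftSub σ))
  | app M N => app (M.sub σ) (N.sub σ)
  | const c a => const c (fun i => (a i).sub σ)

/-- Extension of a substitution by a term (for substituting a single
variable). -/
def cons (M : Tm Sg) (σ : ℕ → Tm Sg) : ℕ → Tm Sg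
  | 0 => M
  | n + 1 => σ n

end Tm

/-- Typing judgement `Γ ⊢ M : A` for λ-terms. -/
inductive HasTy (Sg : Sig1 S) : List (Ty S) → Tm Sg → Ty S → Prop
  | var {Γ : List (Ty S)} {n : ℕ} (h : n < Γ.length) :
      HasTy Sg Γ (.var n) (Γ.get ⟨n, h⟩)
  | unit {Γ} : HasTy Sg Γ .unit .unit
  | pair {Γ M N A B} : HasTy Sg Γ M A → HasTy Sg Γ N B →
      HasTy Sg Γ (.pair M N) (.prod A B)
  | fst {Γ M A B} : HasTy Sg Γ M (.prod A B) → HasTy Sg Γ (.fst M) A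
  | snd {Γ M A B} : HasTy Sg Γ M (.prod A B) → HasTy Sg Γ (.snd M) B
  | lam {Γ M A B} : HasTy Sg (A :: Γ) M B → HasTy Sg Γ (.lam A M) (.arr A B)
  | app {Γ M N A B} : HasTy Sg Γ M (.arr A B) → HasTy Sg Γ N A →
      HasTy Sg Γ (.app M N) B
  | const {Γ} {c : Sg.Op} {args : ℕ → Tm Sg}
      (h : ∀ i (hi : i < (Sg.opCtx c).length),
        HasTy Sg Γ (args i) ((Sg.opCtx c).get ⟨i, hi⟩)) :
      HasTy Sg Γ (.const c args) (Sg.opTy c)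

/-- βη-equivalence of well-typed λ-terms. -/
inductive Beq (Sg : Sig1 S) : List (Ty S) → Tm Sg → Tm Sg → Ty S → Prop
  | refl {Γ M A} : HasTy Sg Γ M A → Beq Sg Γ M M A
  | symm {Γ M N A} : Beq Sg Γ M N A → Beq Sg Γ N M A
  | trans {Γ M N P A} : Beq Sg Γ M N A → Beq Sg Γ N P A → Beq Sg Γ M P A
  | pairCong {Γ M M' N N' A B} : Beq Sg Γ M M' A → Beq Sg Γ N N' B →
      Beq Sg Γ (.pair M N) (.pair M' N') (.prod A B)
  | fstCong {Γ M M' A B} : Beq Sg Γ M M' (.prod A B) →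
      Beq Sg Γ (.fst M) (.fst M') A
  | sndCong {Γ M M' A B} : Beq Sg Γ M M' (.prod A B) →
      Beq Sg Γ (.snd M) (.snd M') B
  | lamCong {Γ M M' A B} : Beq Sg (A :: Γ) M M' B →
      Beq Sg Γ (.lam A M) (.lam A M') (.arr A B)
  | appCong {Γ M M' N N' A B} : Beq Sg Γ M M' (.arr A B) → Beq Sg Γ N N' A →
      Beq Sg Γ (.app M N) (.app M' N') B
  | constCong {Γ} {c : Sg.Op} {args args' : ℕ → Tm Sg}
      (h : ∀ i (hi : i < (Sg.opCtx c).length),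
        Beq Sg Γ (args i) (args' i) ((Sg.opCtx c).get ⟨i, hi⟩)) :
      Beq Sg Γ (.const c args) (.const c args') (Sg.opTy c)
  | beta {Γ M N A B} : HasTy Sg (A :: Γ) M B → HasTy Sg Γ N A →
      Beq Sg Γ (.app (.lam A M) N) (M.sub (Tm.cons N .var)) B
  | eta {Γ M A B} : HasTy Sg Γ M (.arr A B) →
      Beq Sg Γ M (.lam A (.app (M.ren Nat.succ) (.var 0))) (.arr A B)
  | prodBeta1 {Γ M N A B} : HasTy Sg Γ M A → HasTy Sg Γ N B →
      Beq Sg Γ (.fst (.pair M N)) M A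
  | prodBeta2 {Γ M N A B} : HasTy Sg Γ M A → HasTy Sg Γ N B →
      Beq Sg Γ (.snd (.pair M N)) N B
  | prodEta {Γ M A B} : HasTy Sg Γ M (.prod A B) →
      Beq Sg Γ M (.pair (.fst M) (.snd M)) (.prod A B)
  | unitEta {Γ M} : HasTy Sg Γ M .unit → Beq Sg Γ M .unit .unit

/-- A 2-signature: a 1-signature together with a set of reduction rules
between parallel terms. -/
structure Sig2 (S : Type) : Type 1 where
  sig : Sig1 S
  Rule : Type
  ruleCtx : Rule → List (Ty S)
  ruleTy : Rule → Ty S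
  lhs : Rule → Tm sig
  rhs : Rule → Tm sig

/-- Raw reduction terms ("proof terms") over a 1-signature `Sg` and a set `R`
of reduction-rule names.  `vcomp P M Q` is the vertical composite
`P ;_M Q`. -/
inductive Rd (Sg : Sig1 S) (R : Type) : Type
  | var (n : ℕ)
  | unit
  | pair (P Q : Rd Sg R)
  | fst (P : Rd Sg R)
  | snd (P : Rd Sg R)
  | lam (A : Ty S) (P : Rd Sg R)
  | app (P Q : Rd Sg R)
  | const (c : Sg.Op) (args : ℕ → Rd Sg R)
  | rule (r : R) (args : ℕ → Rd Sg R)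
  | vcomp (P : Rd Sg R) (M : Tm Sg) (Q : Rd Sg R)

namespace Rd

variable {Sg : Sig1 S} {R R' : Type}

/-- Every term is an identity reduction on itself. -/
def toRd : Tm Sg → Rd Sg R
  | .var n => var n
  | .unit => unit
  | .pair M N => pair (toRd M) (toRd N)
  | .fst M => fst (toRd M)
  | .snd M => snd (toRd M)
  | .lam A M => lam A (toRd M)
  | .app M N => app (toRd M) (toRd N)
  | .const c a => const c (fun i => toRd (a i))

/-- Renaming of variables in reductions. -/
def ren (f : ℕ → ℕ) : Rd Sg R → Rd Sg R
  | var n => var (f n)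
  | unit => unit
  | pair P Q => pair (P.ren f) (Q.ren f)
  | fst P => fst (P.ren f)
  | snd P => snd (P.ren f)
  | lam A P => lam A (P.ren (Tm.liftRen f))
  | app P Q => app (P.ren f) (Q.ren f)
  | const c a => const c (fun i => (a i).ren f)
  | rule r a => rule r (fun i => (a i).ren f)
  | vcomp P M Q => vcomp (P.ren f) (M.ren f) (Q.ren f)

/-- Relabelling of rule names in a reduction. -/
def mapRule (g : R → R') : Rd Sg R → Rd Sg R'
  | var n => var n
  | unit => unit
  | pair P Q => pair (P.mapRule g) (Q.mapRule g)
  | fst P => fst (P.mapRule g)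
  | snd P => snd (P.mapRule g)
  | lam A P => lam A (P.mapRule g)
  | app P Q => app (P.mapRule g) (Q.mapRule g)
  | const c a => const c (fun i => (a i).mapRule g)
  | rule r a => rule (g r) (fun i => (a i).mapRule g)
  | vcomp P M Q => vcomp (P.mapRule g) M (Q.mapRule g)

/-- Lift a tuple of reductions under a binder. -/
def liftRd (Q : ℕ → Rd Sg R) : ℕ → Rd Sg R
  | 0 => var 0
  | n + 1 => (Q n).ren Nat.succ

/-- Extension of a tuple of reductions by a reduction. -/
def consRd (P : Rd Sg R) (τ : ℕ → Rd Sg R) : ℕ → Rd Sg R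
  | 0 => P
  | n + 1 => τ n

end Rd

/-- Left whiskering `M[Q]` of a term `M` by a tuple of reductions `Q`. -/
def lw {Sg : Sig1 S} {R : Type} (Q : ℕ → Rd Sg R) : Tm Sg → Rd Sg R
  | .var n => Q n
  | .unit => .unit
  | .pair M N => .pair (lw Q M) (lw Q N)
  | .fst M => .fst (lw Q M)
  | .snd M => .snd (lw Q M)
  | .lam A M => .lam A (lw (Rd.liftRd Q) M)
  | .app M N => .app (lw Q M) (lw Q N)
  | .const c a => .const c (fun i => lw Q (a i))

/-- Right whiskering `P[N]` of a reduction `P` by a tuple of terms `N`. -/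
def rw {Sg : Sig1 S} {R : Type} (N : ℕ → Tm Sg) : Rd Sg R → Rd Sg R
  | .var n => Rd.toRd (N n)
  | .unit => .unit
  | .pair P Q => .pair (rw N P) (rw N Q)
  | .fst P => .fst (rw N P)
  | .snd P => .snd (rw N P)
  | .lam A P => .lam A (rw (Tm.liftSub N) P)
  | .app P Q => .app (rw N P) (rw N Q)
  | .const c a => .const c (fun i => rw N (a i))
  | .rule r a => .rule r (fun i => rw N (a i))
  | .vcomp P M Q => .vcomp (rw N P) (M.sub N) (rw N Q)

/-- Substitution of a tuple of reductions `Q : N ⟶ N'` into a reduction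
`P : M ⟶ M'`, defined as `P[N] ;_{M'[N]} M'[Q]`. -/
def rdSub {Sg : Sig1 S} {R : Type} (P : Rd Sg R) (N : ℕ → Tm Sg) (M' : Tm Sg)
    (Q : ℕ → Rd Sg R) : Rd Sg R :=
  .vcomp (rw N P) (M'.sub N) (lw Q M')

/-- The typing judgement `Γ ⊢ P : M ⟶ N : A` for reductions. -/
inductive RdJ (X : Sig2 S) : List (Ty S) → Rd X.sig X.Rule → Tm X.sig → Tm X.sig → Ty S → Prop
  | rule {Γ} {r : X.Rule} {args : ℕ → Rd X.sig X.Rule} {Ms Ns : ℕ → Tm X.sig}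
      (h : ∀ i (hi : i < (X.ruleCtx r).length),
        RdJ X Γ (args i) (Ms i) (Ns i) ((X.ruleCtx r).get ⟨i, hi⟩)) :
      RdJ X Γ (.rule r args) ((X.lhs r).sub Ms) ((X.rhs r).sub Ns) (X.ruleTy r)
  | vcomp {Γ P Q M₁ M₂ M₃ A} : RdJ X Γ P M₁ M₂ A → RdJ X Γ Q M₂ M₃ A →
      RdJ X Γ (.vcomp P M₂ Q) M₁ M₃ A
  | var {Γ : List (Ty S)} {n : ℕ} (h : n < Γ.length) :
      RdJ X Γ (.var n) (.var n) (.var n) (Γ.get ⟨n, h⟩)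
  | unit {Γ} : RdJ X Γ .unit .unit .unit .unit
  | const {Γ} {c : X.sig.Op} {args : ℕ → Rd X.sig X.Rule} {Ms Ns : ℕ → Tm X.sig}
      (h : ∀ i (hi : i < (X.sig.opCtx c).length),
        RdJ X Γ (args i) (Ms i) (Ns i) ((X.sig.opCtx c).get ⟨i, hi⟩)) :
      RdJ X Γ (.const c args) (.const c Ms) (.const c Ns) (X.sig.opTy c)
  | lam {Γ P M N A B} : RdJ X (A :: Γ) P M N B →
      RdJ X Γ (.lam A P) (.lam A M) (.lam A N) (.arr A B)
  | app {Γ P Q M M' N N' A B} : RdJ X Γ P M M' (.arr A B) → RdJ X Γ Q N N' A →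
      RdJ X Γ (.app P Q) (.app M N) (.app M' N') B
  | pair {Γ P Q M M' N N' A B} : RdJ X Γ P M M' A → RdJ X Γ Q N N' B →
      RdJ X Γ (.pair P Q) (.pair M N) (.pair M' N') (.prod A B)
  | fst {Γ P M N A B} : RdJ X Γ P M N (.prod A B) →
      RdJ X Γ (.fst P) (.fst M) (.fst N) A
  | snd {Γ P M N A B} : RdJ X Γ P M N (.prod A B) →
      RdJ X Γ (.snd P) (.snd M) (.snd N) B
  | conv {Γ P M N M' N' A} : RdJ X Γ P M N A → Beq X.sig Γ M M' A →
      Beq X.sig Γ N N' A → RdJ X Γ P M' N' A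
/-- Permutation equivalence `Γ ⊢ P ≡ Q : M ⟶ N : A` on reductions:
the congruence generated by the category laws for vertical composition,
β/η-rules at the level of reductions, and the lifting rules. -/
inductive PEq (X : Sig2 S) : List (Ty S) → Rd X.sig X.Rule → Rd X.sig X.Rule → Tm X.sig → Tm X.sig → Ty S → Prop
  -- congruence rules
  | refl {Γ P M N A} : RdJ X Γ P M N A → PEq X Γ P P M N A
  | symm {Γ P Q M N A} : PEq X Γ P Q M N A → PEq X Γ Q P M N A
  | trans {Γ P Q R₀ M N A} : PEq X Γ P Q M N A → PEq X Γ Q R₀ M N A →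
      PEq X Γ P R₀ M N A
  | vcompCong {Γ P P' Q Q' M₁ M₂ M₃ A} : PEq X Γ P P' M₁ M₂ A →
      PEq X Γ Q Q' M₂ M₃ A →
      PEq X Γ (.vcomp P M₂ Q) (.vcomp P' M₂ Q') M₁ M₃ A
  | ruleCong {Γ} {r : X.Rule} {P Q : ℕ → Rd X.sig X.Rule} {Ms Ns : ℕ → Tm X.sig}
      (h : ∀ i (hi : i < (X.ruleCtx r).length),
        PEq X Γ (P i) (Q i) (Ms i) (Ns i) ((X.ruleCtx r).get ⟨i, hi⟩)) :
      PEq X Γ (.rule r P) (.rule r Q) ((X.lhs r).sub Ms) ((X.rhs r).sub Ns) (X.ruleTy r)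
  | constCong {Γ} {c : X.sig.Op} {P Q : ℕ → Rd X.sig X.Rule} {Ms Ns : ℕ → Tm X.sig}
      (h : ∀ i (hi : i < (X.sig.opCtx c).length),
        PEq X Γ (P i) (Q i) (Ms i) (Ns i) ((X.sig.opCtx c).get ⟨i, hi⟩)) :
      PEq X Γ (.const c P) (.const c Q) (.const c Ms) (.const c Ns) (X.sig.opTy c)
  | lamCong {Γ P Q M N A B} : PEq X (A :: Γ) P Q M N B →
      PEq X Γ (.lam A P) (.lam A Q) (.lam A M) (.lam A N) (.arr A B)
  | appCong {Γ P P' Q Q' M M' N N' A B} : PEq X Γ P P' M M' (.arr A B) →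
      PEq X Γ Q Q' N N' A →
      PEq X Γ (.app P Q) (.app P' Q') (.app M N) (.app M' N') B
  | pairCong {Γ P P' Q Q' M M' N N' A B} : PEq X Γ P P' M M' A →
      PEq X Γ Q Q' N N' B →
      PEq X Γ (.pair P Q) (.pair P' Q') (.pair M N) (.pair M' N') (.prod A B)
  | fstCong {Γ P Q M N A B} : PEq X Γ P Q M N (.prod A B) →
      PEq X Γ (.fst P) (.fst Q) (.fst M) (.fst N) A
  | sndCong {Γ P Q M N A B} : PEq X Γ P Q M N (.prod A B) →
      PEq X Γ (.snd P) (.snd Q) (.snd M) (.snd N) B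
  -- category rules
  | assoc {Γ P₁ P₂ P₃ M₁ M₂ M₃ M₄ A} : RdJ X Γ P₁ M₁ M₂ A → RdJ X Γ P₂ M₂ M₃ A →
      RdJ X Γ P₃ M₃ M₄ A →
      PEq X Γ (.vcomp P₁ M₂ (.vcomp P₂ M₃ P₃)) (.vcomp (.vcomp P₁ M₂ P₂) M₃ P₃) M₁ M₄ A
  | unitR {Γ P M N A} : RdJ X Γ P M N A →
      PEq X Γ (.vcomp P N (Rd.toRd N)) P M N A
  | unitL {Γ P M N A} : RdJ X Γ P M N A →
      PEq X Γ (.vcomp (Rd.toRd M) M P) P M N A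
  -- beta and eta rules
  | beta {Γ P Q M M' N N' A B} : RdJ X (A :: Γ) P M M' B → RdJ X Γ Q N N' A →
      PEq X Γ (.app (.lam A P) Q)
        (rdSub P (Tm.cons N Tm.var) M' (Rd.consRd Q (fun n => Rd.var n)))
        (.app (.lam A M) N) (M'.sub (Tm.cons N' Tm.var)) B
  | eta {Γ P M N A B} : RdJ X Γ P M N (.arr A B) →
      PEq X Γ P (.lam A (.app (P.ren Nat.succ) (.var 0))) M N (.arr A B)
  | fstPair {Γ P Q M₁ M₂ N₁ N₂ A B} : RdJ X Γ P M₁ M₂ A → RdJ X Γ Q N₁ N₂ B →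
      PEq X Γ (.fst (.pair P Q)) P (.fst (.pair M₁ N₁)) M₂ A
  | sndPair {Γ P Q M₁ M₂ N₁ N₂ A B} : RdJ X Γ P M₁ M₂ A → RdJ X Γ Q N₁ N₂ B →
      PEq X Γ (.snd (.pair P Q)) Q (.snd (.pair M₁ N₁)) N₂ B
  | pairEta {Γ P M₁ M₂ N₁ N₂ A B} : RdJ X Γ P (.pair M₁ N₁) (.pair M₂ N₂) (.prod A B) →
      PEq X Γ P (.pair (.fst P) (.snd P)) (.pair M₁ N₁) (.pair M₂ N₂) (.prod A B)
  | unitEta {Γ P M N} : RdJ X Γ P M N .unit → PEq X Γ P .unit M N .unit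
  -- lifting rules
  | ruleLift1 {Δ} {r : X.Rule} {P Q : ℕ → Rd X.sig X.Rule} {N₁ N₂ N₃ : ℕ → Tm X.sig}
      (hP : ∀ i (hi : i < (X.ruleCtx r).length),
        RdJ X Δ (P i) (N₁ i) (N₂ i) ((X.ruleCtx r).get ⟨i, hi⟩))
      (hQ : ∀ i (hi : i < (X.ruleCtx r).length),
        RdJ X Δ (Q i) (N₂ i) (N₃ i) ((X.ruleCtx r).get ⟨i, hi⟩)) :
      PEq X Δ (.rule r (fun i => .vcomp (P i) (N₂ i) (Q i)))
        (.vcomp (lw P (X.lhs r)) ((X.lhs r).sub N₂) (.rule r Q))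
        ((X.lhs r).sub N₁) ((X.rhs r).sub N₃) (X.ruleTy r)
  | ruleLift2 {Δ} {r : X.Rule} {P Q : ℕ → Rd X.sig X.Rule} {N₁ N₂ N₃ : ℕ → Tm X.sig}
      (hP : ∀ i (hi : i < (X.ruleCtx r).length),
        RdJ X Δ (P i) (N₁ i) (N₂ i) ((X.ruleCtx r).get ⟨i, hi⟩))
      (hQ : ∀ i (hi : i < (X.ruleCtx r).length),
        RdJ X Δ (Q i) (N₂ i) (N₃ i) ((X.ruleCtx r).get ⟨i, hi⟩)) :
      PEq X Δ (.rule r (fun i => .vcomp (P i) (N₂ i) (Q i)))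
        (.vcomp (.rule r P) ((X.rhs r).sub N₂) (lw Q (X.rhs r)))
        ((X.lhs r).sub N₁) ((X.rhs r).sub N₃) (X.ruleTy r)
  | constLift {Γ} {c : X.sig.Op} {P Q : ℕ → Rd X.sig X.Rule} {M₁ M₂ M₃ : ℕ → Tm X.sig}
      (hP : ∀ i (hi : i < (X.sig.opCtx c).length),
        RdJ X Γ (P i) (M₁ i) (M₂ i) ((X.sig.opCtx c).get ⟨i, hi⟩))
      (hQ : ∀ i (hi : i < (X.sig.opCtx c).length),
        RdJ X Γ (Q i) (M₂ i) (M₃ i) ((X.sig.opCtx c).get ⟨i, hi⟩)) :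
      PEq X Γ (.const c (fun i => .vcomp (P i) (M₂ i) (Q i)))
        (.vcomp (.const c P) (.const c M₂) (.const c Q))
        (.const c M₁) (.const c M₃) (X.sig.opTy c)
  | lamLift {Γ P Q M₁ M₂ M₃ A B} : RdJ X (A :: Γ) P M₁ M₂ B →
      RdJ X (A :: Γ) Q M₂ M₃ B →
      PEq X Γ (.lam A (.vcomp P M₂ Q))
        (.vcomp (.lam A P) (.lam A M₂) (.lam A Q))
        (.lam A M₁) (.lam A M₃) (.arr A B)
  | appLift {Γ P P' Q Q' M₁ M₂ M₃ N₁ N₂ N₃ A B} :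
      RdJ X Γ P M₁ M₂ (.arr A B) → RdJ X Γ P' M₂ M₃ (.arr A B) →
      RdJ X Γ Q N₁ N₂ A → RdJ X Γ Q' N₂ N₃ A →
      PEq X Γ (.app (.vcomp P M₂ P') (.vcomp Q N₂ Q'))
        (.vcomp (.app P Q) (.app M₂ N₂) (.app P' Q'))
        (.app M₁ N₁) (.app M₃ N₃) B
  | pairLift {Γ P P' Q Q' M₁ M₂ M₃ N₁ N₂ N₃ A B} :
      RdJ X Γ P M₁ M₂ A → RdJ X Γ P' M₂ M₃ A →
      RdJ X Γ Q N₁ N₂ B → RdJ X Γ Q' N₂ N₃ B →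
      PEq X Γ (.pair (.vcomp P M₂ P') (.vcomp Q N₂ Q'))
        (.vcomp (.pair P Q) (.pair M₂ N₂) (.pair P' Q'))
        (.pair M₁ N₁) (.pair M₃ N₃) (.prod A B)
  | fstLift {Γ P Q M₁ M₂ M₃ A B} : RdJ X Γ P M₁ M₂ (.prod A B) →
      RdJ X Γ Q M₂ M₃ (.prod A B) →
      PEq X Γ (.fst (.vcomp P M₂ Q)) (.vcomp (.fst P) (.fst M₂) (.fst Q))
        (.fst M₁) (.fst M₃) A
  | sndLift {Γ P Q M₁ M₂ M₃ A B} : RdJ X Γ P M₁ M₂ (.prod A B) →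
      RdJ X Γ Q M₂ M₃ (.prod A B) →
      PEq X Γ (.snd (.vcomp P M₂ Q)) (.vcomp (.snd P) (.snd M₂) (.snd Q))
        (.snd M₁) (.snd M₃) B
  -- endpoints are βη-classes
  | conv {Γ P Q M N M' N' A} : PEq X Γ P Q M N A → Beq X.sig Γ M M' A →
      Beq X.sig Γ N N' A → PEq X Γ P Q M' N' A
/-- The rules of the 2-signature `L X`: reductions over `X` together with
their boundary (which the paper takes modulo permutation equivalence). -/
structure LRule (X : Sig2 S) : Type where
  ctx : List (Ty S)
  red : Rd X.sig X.Rule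
  src : Tm X.sig
  tgt : Tm X.sig
  ty : Ty S

/-- The 2-signature `L X`: same sorts and operations as `X`, and with
reduction rules the reductions over `X`. -/
def LSig (X : Sig2 S) : Sig2 S where
  sig := X.sig
  Rule := LRule X
  ruleCtx := LRule.ctx
  ruleTy := LRule.ty
  lhs := LRule.src
  rhs := LRule.tgt

/-- Source endpoint of a raw reduction. -/
def srcRd (X : Sig2 S) : Rd X.sig X.Rule → Tm X.sig
  | .var n => .var n
  | .unit => .unit
  | .pair P Q => .pair (srcRd X P) (srcRd X Q)
  | .fst P => .fst (srcRd X P)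
  | .snd P => .snd (srcRd X P)
  | .lam A P => .lam A (srcRd X P)
  | .app P Q => .app (srcRd X P) (srcRd X Q)
  | .const c a => .const c (fun i => srcRd X (a i))
  | .rule r a => (X.lhs r).sub (fun i => srcRd X (a i))
  | .vcomp P _ _ => srcRd X P

/-- Target endpoint of a raw reduction. -/
def tgtRd (X : Sig2 S) : Rd X.sig X.Rule → Tm X.sig
  | .var n => .var n
  | .unit => .unit
  | .pair P Q => .pair (tgtRd X P) (tgtRd X Q)
  | .fst P => .fst (tgtRd X P)
  | .snd P => .snd (tgtRd X P)
  | .lam A P => .lam A (tgtRd X P)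
  | .app P Q => .app (tgtRd X P) (tgtRd X Q)
  | .const c a => .const c (fun i => tgtRd X (a i))
  | .rule r a => (X.rhs r).sub (fun i => tgtRd X (a i))
  | .vcomp _ _ Q => tgtRd X Q

/-- The multiplication `μ_X : L (L X) → L X` on reductions: a rule
application `R⟨P₁,…,Pₙ⟩` is interpreted as the substitution `R[μP₁,…,μPₙ]`,
and `μ` commutes with all the other constructors. -/
def mu (X : Sig2 S) : Rd X.sig (LRule X) → Rd X.sig X.Rule
  | .var n => .var n
  | .unit => .unit
  | .pair P Q => .pair (mu X P) (mu X Q)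
  | .fst P => .fst (mu X P)
  | .snd P => .snd (mu X P)
  | .lam A P => .lam A (mu X P)
  | .app P Q => .app (mu X P) (mu X Q)
  | .const c a => .const c (fun i => mu X (a i))
  | .rule Rr a => rdSub Rr.red (fun i => srcRd X (mu X (a i))) Rr.tgt (fun i => mu X (a i))
  | .vcomp P M Q => .vcomp (mu X P) M (mu X Q)

/-- The unit `η` on reductions: `r ↦ r⟨x₁,…,xₙ⟩`. -/
def etaRd (X : Sig2 S) (r : X.Rule) : Rd X.sig X.Rule :=
  .rule r (fun i => .var i)

/-- The unit `η_X : X → L X` on rules. -/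
def etaRule (X : Sig2 S) (r : X.Rule) : LRule X :=
  ⟨X.ruleCtx r, etaRd X r, X.lhs r, X.rhs r, X.ruleTy r⟩

/-- The rule component of `μ_X : L (L X) → L X`. -/
def muRule (X : Sig2 S) (R₀ : LRule (LSig X)) : LRule X :=
  ⟨R₀.ctx, mu X R₀.red, R₀.src, R₀.tgt, R₀.ty⟩

/-! ### Auxiliary syntactic lemmas -/

section Aux

variable {Sg : Sig1 S} {R R' : Type}

namespace Tm

theorem liftRen_comp (f g : ℕ → ℕ) :
    (fun n => liftRen g (liftRen f n)) = liftRen (fun n => g (f n)) := by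
  funext n; cases n <;> rfl

theorem ren_ren (M : Tm Sg) : ∀ f g : ℕ → ℕ,
    (M.ren f).ren g = M.ren (fun n => g (f n)) := by
  induction M with
  | var n => intros; rfl
  | unit => intros; rfl
  | pair M N ihM ihN => intro f g; simp [ren, ihM, ihN]
  | fst M ih => intro f g; simp [ren, ih]
  | snd M ih => intro f g; simp [ren, ih]
  | lam A M ih => intro f g; simp [ren, ih, liftRen_comp]
  | app M N ihM ihN => intro f g; simp [ren, ihM, ihN]
  | const c a ih => intro f g; simp only [ren, const.injEq, heq_eq_eq, true_and]
                    funext i; exact ih i f g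

theorem liftSub_liftRen (σ : ℕ → Tm Sg) (f : ℕ → ℕ) :
    (fun n => liftSub σ (liftRen f n)) = liftSub (fun n => σ (f n)) := by
  funext n; cases n <;> rfl

theorem sub_ren (M : Tm Sg) : ∀ (f : ℕ → ℕ) (σ : ℕ → Tm Sg),
    (M.ren f).sub σ = M.sub (fun n => σ (f n)) := by
  induction M with
  | var n => intros; rfl
  | unit => intros; rfl
  | pair M N ihM ihN => intro f σ; simp [ren, sub, ihM, ihN]
  | fst M ih => intro f σ; simp [ren, sub, ih]
  | snd M ih => intro f σ; simp [ren, sub, ih]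
  | lam A M ih => intro f σ; simp [ren, sub, ih, liftSub_liftRen]
  | app M N ihM ihN => intro f σ; simp [ren, sub, ihM, ihN]
  | const c a ih => intro f σ; simp only [ren, sub, const.injEq, heq_eq_eq, true_and]
                    funext i; exact ih i f σ

theorem ren_liftSub (σ : ℕ → Tm Sg) (f : ℕ → ℕ) :
    (fun n => (liftSub σ n).ren (liftRen f)) = liftSub (fun n => (σ n).ren f) := by
  funext n; cases n with
  | zero => rfl
  | succ n =>
      show ((σ n).ren Nat.succ).ren (liftRen f) = ((σ n).ren f).ren Nat.succ
      rw [ren_ren, ren_ren]; congr 1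

theorem ren_sub (M : Tm Sg) : ∀ (σ : ℕ → Tm Sg) (f : ℕ → ℕ),
    (M.sub σ).ren f = M.sub (fun n => (σ n).ren f) := by
  induction M with
  | var n => intros; rfl
  | unit => intros; rfl
  | pair M N ihM ihN => intro σ f; simp [ren, sub, ihM, ihN]
  | fst M ih => intro σ f; simp [ren, sub, ih]
  | snd M ih => intro σ f; simp [ren, sub, ih]
  | lam A M ih => intro σ f; simp [ren, sub, ih, ren_liftSub]
  | app M N ihM ihN => intro σ f; simp [ren, sub, ihM, ihN]
  | const c a ih => intro σ f; simp only [ren, sub, const.injEq, heq_eq_eq, true_and]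
                    funext i; exact ih i σ f

theorem liftSub_var : (liftSub (fun n => (Tm.var n : Tm Sg))) = fun n => Tm.var n := by
  funext n; cases n <;> rfl

theorem sub_var (M : Tm Sg) : M.sub (fun n => Tm.var n) = M := by
  induction M with
  | var n => rfl
  | unit => rfl
  | pair M N ihM ihN => simp [sub, ihM, ihN]
  | fst M ih => simp [sub, ih]
  | snd M ih => simp [sub, ih]
  | lam A M ih => simp [sub, liftSub_var, ih]
  | app M N ihM ihN => simp [sub, ihM, ihN]
  | const c a ih => simp only [sub, const.injEq, heq_eq_eq, true_and]
                    funext i; exact ih i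

end Tm

namespace Rd

theorem ren_ren (P : Rd Sg R) : ∀ f g : ℕ → ℕ,
    (P.ren f).ren g = P.ren (fun n => g (f n)) := by
  induction P with
  | var n => intros; rfl
  | unit => intros; rfl
  | pair P Q ihP ihQ => intro f g; simp [ren, ihP, ihQ]
  | fst P ih => intro f g; simp [ren, ih]
  | snd P ih => intro f g; simp [ren, ih]
  | lam A P ih => intro f g; simp [ren, ih, Tm.liftRen_comp]
  | app P Q ihP ihQ => intro f g; simp [ren, ihP, ihQ]
  | const c a ih => intro f g; simp only [ren, const.injEq, heq_eq_eq, true_and]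
                    funext i; exact ih i f g
  | rule r a ih => intro f g; simp only [ren, rule.injEq, heq_eq_eq, true_and]
                   funext i; exact ih i f g
  | vcomp P M Q ihP ihQ => intro f g; simp [ren, ihP, ihQ, Tm.ren_ren]

theorem toRd_ren (M : Tm Sg) : ∀ f : ℕ → ℕ,
    (toRd M : Rd Sg R).ren f = toRd (M.ren f) := by
  induction M with
  | var n => intros; rfl
  | unit => intros; rfl
  | pair M N ihM ihN => intro f; simp [toRd, Tm.ren, ren, ihM, ihN]
  | fst M ih => intro f; simp [toRd, Tm.ren, ren, ih]
  | snd M ih => intro f; simp [toRd, Tm.ren, ren, ih]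
  | lam A M ih => intro f; simp [toRd, Tm.ren, ren, ih]
  | app M N ihM ihN => intro f; simp [toRd, Tm.ren, ren, ihM, ihN]
  | const c a ih => intro f; simp only [toRd, Tm.ren, ren, const.injEq, heq_eq_eq, true_and]
                    funext i; exact ih i f

theorem mapRule_ren (g : R → R') (P : Rd Sg R) : ∀ f : ℕ → ℕ,
    (P.ren f).mapRule g = (P.mapRule g).ren f := by
  induction P with
  | var n => intros; rfl
  | unit => intros; rfl
  | pair P Q ihP ihQ => intro f; simp [ren, mapRule, ihP, ihQ]
  | fst P ih => intro f; simp [ren, mapRule, ih]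
  | snd P ih => intro f; simp [ren, mapRule, ih]
  | lam A P ih => intro f; simp [ren, mapRule, ih]
  | app P Q ihP ihQ => intro f; simp [ren, mapRule, ihP, ihQ]
  | const c a ih => intro f; simp only [ren, mapRule, const.injEq, heq_eq_eq, true_and]
                    funext i; exact ih i f
  | rule r a ih => intro f; simp only [ren, mapRule, rule.injEq, heq_eq_eq, true_and]
                   funext i; exact ih i f
  | vcomp P M Q ihP ihQ => intro f; simp [ren, mapRule, ihP, ihQ]

theorem liftRd_mapRule (g : R → R') (Q : ℕ → Rd Sg R) :
    (fun n => (liftRd Q n).mapRule g) = liftRd (fun n => (Q n).mapRule g) := by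
  funext n; cases n with
  | zero => rfl
  | succ n => exact mapRule_ren g (Q n) _

theorem liftRd_var : liftRd (fun n => (Rd.var n : Rd Sg R)) = fun n => Rd.var n := by
  funext n; cases n <;> rfl

end Rd

theorem mapRule_lw {g : R → R'} (M : Tm Sg) : ∀ Q : ℕ → Rd Sg R,
    (lw Q M).mapRule g = lw (fun n => (Q n).mapRule g) M := by
  induction M with
  | var n => intros; rfl
  | unit => intros; rfl
  | pair M N ihM ihN => intro Q; simp [lw, Rd.mapRule, ihM, ihN]
  | fst M ih => intro Q; simp [lw, Rd.mapRule, ih]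
  | snd M ih => intro Q; simp [lw, Rd.mapRule, ih]
  | lam A M ih => intro Q; simp [lw, Rd.mapRule, ih, Rd.liftRd_mapRule]
  | app M N ihM ihN => intro Q; simp [lw, Rd.mapRule, ihM, ihN]
  | const c a ih => intro Q; simp only [lw, Rd.mapRule, Rd.const.injEq, heq_eq_eq, true_and]
                    funext i; exact ih i Q

theorem lw_var (M : Tm Sg) : lw (fun n => (Rd.var n : Rd Sg R)) M = Rd.toRd M := by
  induction M with
  | var n => rfl
  | unit => rfl
  | pair M N ihM ihN => simp [lw, Rd.toRd, ihM, ihN]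
  | fst M ih => simp [lw, Rd.toRd, ih]
  | snd M ih => simp [lw, Rd.toRd, ih]
  | lam A M ih => simp [lw, Rd.toRd, Rd.liftRd_var, ih]
  | app M N ihM ihN => simp [lw, Rd.toRd, ihM, ihN]
  | const c a ih => simp only [lw, Rd.toRd, Rd.const.injEq, heq_eq_eq, true_and]
                    funext i; exact ih i

theorem rw_toRd {R : Type} (M : Tm Sg) : ∀ σ : ℕ → Tm Sg,
    rw σ (Rd.toRd M : Rd Sg R) = Rd.toRd (M.sub σ) := by
  induction M with
  | var n => intros; rfl
  | unit => intros; rfl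
  | pair M N ihM ihN => intro σ; simp [Rd.toRd, Tm.sub, rw, ihM, ihN]
  | fst M ih => intro σ; simp [Rd.toRd, Tm.sub, rw, ih]
  | snd M ih => intro σ; simp [Rd.toRd, Tm.sub, rw, ih]
  | lam A M ih => intro σ; simp [Rd.toRd, Tm.sub, rw, ih]
  | app M N ihM ihN => intro σ; simp [Rd.toRd, Tm.sub, rw, ihM, ihN]
  | const c a ih => intro σ; simp only [Rd.toRd, Tm.sub, rw, Rd.const.injEq, heq_eq_eq, true_and]
                    funext i; exact ih i σ

theorem rw_ren {R : Type} (P : Rd Sg R) : ∀ (σ : ℕ → Tm Sg) (f : ℕ → ℕ),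
    (rw σ P).ren f = rw (fun n => (σ n).ren f) P := by
  induction P with
  | var n => intro σ f; exact Rd.toRd_ren (σ n) f
  | unit => intros; rfl
  | pair P Q ihP ihQ => intro σ f; simp [rw, Rd.ren, ihP, ihQ]
  | fst P ih => intro σ f; simp [rw, Rd.ren, ih]
  | snd P ih => intro σ f; simp [rw, Rd.ren, ih]
  | lam A P ih => intro σ f; simp [rw, Rd.ren, ih, Tm.ren_liftSub]
  | app P Q ihP ihQ => intro σ f; simp [rw, Rd.ren, ihP, ihQ]
  | const c a ih => intro σ f; simp only [rw, Rd.ren, Rd.const.injEq, heq_eq_eq, true_and]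
                    funext i; exact ih i σ f
  | rule r a ih => intro σ f; simp only [rw, Rd.ren, Rd.rule.injEq, heq_eq_eq, true_and]
                   funext i; exact ih i σ f
  | vcomp P M Q ihP ihQ => intro σ f; simp [rw, Rd.ren, ihP, ihQ, Tm.ren_sub]

theorem ren_liftRd {R : Type} (Q : ℕ → Rd Sg R) (f : ℕ → ℕ) :
    (fun n => (Rd.liftRd Q n).ren (Tm.liftRen f)) = Rd.liftRd (fun n => (Q n).ren f) := by
  funext n; cases n with
  | zero => rfl
  | succ n =>
      show ((Q n).ren Nat.succ).ren (Tm.liftRen f) = ((Q n).ren f).ren Nat.succ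
      rw [Rd.ren_ren, Rd.ren_ren]; congr 1

theorem lw_ren {R : Type} (M : Tm Sg) : ∀ (Q : ℕ → Rd Sg R) (f : ℕ → ℕ),
    (lw Q M).ren f = lw (fun n => (Q n).ren f) M := by
  induction M with
  | var n => intros; rfl
  | unit => intros; rfl
  | pair M N ihM ihN => intro Q f; simp [lw, Rd.ren, ihM, ihN]
  | fst M ih => intro Q f; simp [lw, Rd.ren, ih]
  | snd M ih => intro Q f; simp [lw, Rd.ren, ih]
  | lam A M ih => intro Q f; simp [lw, Rd.ren, ih, ren_liftRd]
  | app M N ihM ihN => intro Q f; simp [lw, Rd.ren, ihM, ihN]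
  | const c a ih => intro Q f; simp only [lw, Rd.ren, Rd.const.injEq, heq_eq_eq, true_and]
                    funext i; exact ih i Q f

theorem srcRd_ren (X : Sig2 S) (P : Rd X.sig X.Rule) : ∀ f : ℕ → ℕ,
    srcRd X (P.ren f) = (srcRd X P).ren f := by
  induction P with
  | var n => intros; rfl
  | unit => intros; rfl
  | pair P Q ihP ihQ => intro f; simp [srcRd, Rd.ren, Tm.ren, ihP, ihQ]
  | fst P ih => intro f; simp [srcRd, Rd.ren, Tm.ren, ih]
  | snd P ih => intro f; simp [srcRd, Rd.ren, Tm.ren, ih]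
  | lam A P ih => intro f; simp [srcRd, Rd.ren, Tm.ren, ih]
  | app P Q ihP ihQ => intro f; simp [srcRd, Rd.ren, Tm.ren, ihP, ihQ]
  | const c a ih => intro f; simp only [srcRd, Rd.ren, Tm.ren, Tm.const.injEq, heq_eq_eq, true_and]
                    funext i; exact ih i f
  | rule r a ih => intro f
                   show (X.lhs r).sub (fun i => srcRd X ((a i).ren f)) = ((X.lhs r).sub _).ren f
                   rw [Tm.ren_sub]; congr 1; funext i; exact ih i f
  | vcomp P M Q ihP ihQ => intro f; exact ihP f

theorem mu_ren (X : Sig2 S) (P : Rd X.sig (LRule X)) : ∀ f : ℕ → ℕ,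
    mu X (P.ren f) = (mu X P).ren f := by
  induction P with
  | var n => intros; rfl
  | unit => intros; rfl
  | pair P Q ihP ihQ => intro f; simp [mu, Rd.ren, ihP, ihQ]
  | fst P ih => intro f; simp [mu, Rd.ren, ih]
  | snd P ih => intro f; simp [mu, Rd.ren, ih]
  | lam A P ih => intro f; simp [mu, Rd.ren, ih]
  | app P Q ihP ihQ => intro f; simp [mu, Rd.ren, ihP, ihQ]
  | const c a ih => intro f; simp only [mu, Rd.ren, Rd.const.injEq, heq_eq_eq, true_and]
                    funext i; exact ih i f
  | rule r a ih =>
      intro f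
      show rdSub r.red (fun i => srcRd X (mu X ((a i).ren f))) r.tgt
            (fun i => mu X ((a i).ren f))
          = Rd.ren f (rdSub r.red (fun i => srcRd X (mu X (a i))) r.tgt
            (fun i => mu X (a i)))
      have e1 : (fun i => srcRd X (mu X ((a i).ren f)))
          = fun i => (srcRd X (mu X (a i))).ren f := by
        funext i; rw [ih i f, srcRd_ren]
      have e2 : (fun i => mu X ((a i).ren f)) = fun i => (mu X (a i)).ren f := by
        funext i; rw [ih i f]
      rw [e1, e2]
      simp only [rdSub, Rd.ren, rw_ren, Tm.ren_sub, lw_ren]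
  | vcomp P M Q ihP ihQ => intro f; simp [mu, Rd.ren, ihP, ihQ]

theorem mu_lw (X : Sig2 S) (M : Tm X.sig) : ∀ Q : ℕ → Rd X.sig (LRule X),
    mu X (lw Q M) = lw (fun n => mu X (Q n)) M := by
  induction M with
  | var n => intros; rfl
  | unit => intros; rfl
  | pair M N ihM ihN => intro Q; simp [lw, mu, ihM, ihN]
  | fst M ih => intro Q; simp [lw, mu, ih]
  | snd M ih => intro Q; simp [lw, mu, ih]
  | lam A M ih =>
      intro Q
      have e : (fun n => mu X (Rd.liftRd Q n)) = Rd.liftRd (fun n => mu X (Q n)) := by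
        funext n; cases n with
        | zero => rfl
        | succ n => exact mu_ren X (Q n) Nat.succ
      simp only [lw, mu, ih, e]
  | app M N ihM ihN => intro Q; simp [lw, mu, ihM, ihN]
  | const c a ih => intro Q; simp only [lw, mu, Rd.const.injEq, heq_eq_eq, true_and]
                    funext i; exact ih i Q

/-! ### Renaming preserves typing -/

/-- `f` is a valid renaming from context `Γ` to context `Γ'`. -/
def RenOk (f : ℕ → ℕ) (Γ Γ' : List (Ty S)) : Prop :=
  ∀ n (hn : n < Γ.length), ∃ hn' : f n < Γ'.length, Γ'.get ⟨f n, hn'⟩ = Γ.get ⟨n, hn⟩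

theorem RenOk.succ (Γ : List (Ty S)) (A : Ty S) : RenOk Nat.succ Γ (A :: Γ) := by
  intro n hn
  exact ⟨Nat.succ_lt_succ hn, rfl⟩

theorem RenOk.lift {f : ℕ → ℕ} {Γ Γ' : List (Ty S)} (hf : RenOk f Γ Γ') (A : Ty S) :
    RenOk (Tm.liftRen f) (A :: Γ) (A :: Γ') := by
  intro n hn
  cases n with
  | zero => exact ⟨Nat.succ_pos _, rfl⟩
  | succ n =>
      obtain ⟨h1, h2⟩ := hf n (Nat.lt_of_succ_lt_succ hn)
      exact ⟨Nat.succ_lt_succ h1, h2⟩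

theorem HasTy.ren {Γ : List (Ty S)} {M : Tm Sg} {A : Ty S}
    (hM : HasTy Sg Γ M A) :
    ∀ {Γ' : List (Ty S)} {f : ℕ → ℕ}, RenOk f Γ Γ' → HasTy Sg Γ' (M.ren f) A := by
  induction hM with
  | @var Γ n hn =>
      intro Γ' f hf
      obtain ⟨h1, h2⟩ := hf n hn
      exact h2 ▸ HasTy.var h1
  | unit => intro Γ' f hf; exact HasTy.unit
  | pair h1 h2 ih1 ih2 => intro Γ' f hf; exact HasTy.pair (ih1 hf) (ih2 hf)
  | fst h1 ih1 => intro Γ' f hf; exact HasTy.fst (ih1 hf)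
  | snd h1 ih1 => intro Γ' f hf; exact HasTy.snd (ih1 hf)
  | lam h1 ih1 => intro Γ' f hf; exact HasTy.lam (ih1 (hf.lift _))
  | app h1 h2 ih1 ih2 => intro Γ' f hf; exact HasTy.app (ih1 hf) (ih2 hf)
  | const h1 ih1 => intro Γ' f hf; exact HasTy.const (fun i hi => ih1 i hi hf)

theorem ren_sub_cons (M N : Tm Sg) (f : ℕ → ℕ) :
    (M.sub (Tm.cons N Tm.var)).ren f
      = (M.ren (Tm.liftRen f)).sub (Tm.cons (N.ren f) Tm.var) := by
  rw [Tm.ren_sub, Tm.sub_ren]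
  congr 1
  funext n; cases n <;> rfl

theorem Beq.ren {Γ : List (Ty S)} {M N : Tm Sg} {A : Ty S}
    (hMN : Beq Sg Γ M N A) :
    ∀ {Γ' : List (Ty S)} {f : ℕ → ℕ}, RenOk f Γ Γ' → Beq Sg Γ' (M.ren f) (N.ren f) A := by
  induction hMN with
  | refl h => intro Γ' f hf; exact Beq.refl (h.ren hf)
  | symm _ ih => intro Γ' f hf; exact Beq.symm (ih hf)
  | trans _ _ ih1 ih2 => intro Γ' f hf; exact Beq.trans (ih1 hf) (ih2 hf)
  | pairCong _ _ ih1 ih2 => intro Γ' f hf; exact Beq.pairCong (ih1 hf) (ih2 hf)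
  | fstCong _ ih => intro Γ' f hf; exact Beq.fstCong (ih hf)
  | sndCong _ ih => intro Γ' f hf; exact Beq.sndCong (ih hf)
  | lamCong _ ih => intro Γ' f hf; exact Beq.lamCong (ih (hf.lift _))
  | appCong _ _ ih1 ih2 => intro Γ' f hf; exact Beq.appCong (ih1 hf) (ih2 hf)
  | constCong _ ih => intro Γ' f hf; exact Beq.constCong (fun i hi => ih i hi hf)
  | @beta Γ M N A B h1 h2 =>
      intro Γ' f hf
      have := Beq.beta (h1.ren (hf.lift A)) (h2.ren hf)
      rw [ren_sub_cons]
      exact this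
  | @eta Γ M A B h1 =>
      intro Γ' f hf
      have := Beq.eta (Sg := Sg) (h1.ren hf)
      have e : (M.ren f).ren Nat.succ = (M.ren Nat.succ).ren (Tm.liftRen f) := by
        rw [Tm.ren_ren, Tm.ren_ren]; congr 1
      rw [e] at this
      exact this
  | prodBeta1 h1 h2 => intro Γ' f hf; exact Beq.prodBeta1 (h1.ren hf) (h2.ren hf)
  | prodBeta2 h1 h2 => intro Γ' f hf; exact Beq.prodBeta2 (h1.ren hf) (h2.ren hf)
  | prodEta h1 => intro Γ' f hf; exact Beq.prodEta (h1.ren hf)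
  | unitEta h1 => intro Γ' f hf; exact Beq.unitEta (h1.ren hf)

theorem RdJ.ren {X : Sig2 S} {Γ : List (Ty S)} {P : Rd X.sig X.Rule} {M N : Tm X.sig}
    {A : Ty S} (hP : RdJ X Γ P M N A) :
    ∀ {Γ' : List (Ty S)} {f : ℕ → ℕ}, RenOk f Γ Γ' →
      RdJ X Γ' (P.ren f) (M.ren f) (N.ren f) A := by
  induction hP with
  | @rule Γ r args Ms Ns h ih =>
      intro Γ' f hf
      have := RdJ.rule (X := X) (r := r) (args := fun i => (args i).ren f)
        (Ms := fun i => (Ms i).ren f) (Ns := fun i => (Ns i).ren f)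
        (fun i hi => ih i hi hf)
      rw [Tm.ren_sub, Tm.ren_sub]
      exact this
  | vcomp h1 h2 ih1 ih2 => intro Γ' f hf; exact RdJ.vcomp (ih1 hf) (ih2 hf)
  | @var Γ n hn =>
      intro Γ' f hf
      obtain ⟨h1, h2⟩ := hf n hn
      exact h2 ▸ RdJ.var h1
  | unit => intro Γ' f hf; exact RdJ.unit
  | const h ih => intro Γ' f hf; exact RdJ.const (fun i hi => ih i hi hf)
  | lam h ih => intro Γ' f hf; exact RdJ.lam (ih (hf.lift _))
  | app h1 h2 ih1 ih2 => intro Γ' f hf; exact RdJ.app (ih1 hf) (ih2 hf)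
  | pair h1 h2 ih1 ih2 => intro Γ' f hf; exact RdJ.pair (ih1 hf) (ih2 hf)
  | fst h ih => intro Γ' f hf; exact RdJ.fst (ih hf)
  | snd h ih => intro Γ' f hf; exact RdJ.snd (ih hf)
  | conv h hb1 hb2 ih => intro Γ' f hf; exact RdJ.conv (ih hf) (hb1.ren hf) (hb2.ren hf)

theorem get_congr {α' : Type _} {l l' : List α'} (e : l = l') {i : ℕ}
    (hi : i < l.length) :
    ∃ hi' : i < l'.length, l.get ⟨i, hi⟩ = l'.get ⟨i, hi'⟩ := by
  subst e; exact ⟨hi, rfl⟩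

theorem RdJ.toRd {X : Sig2 S} {Γ : List (Ty S)} {M : Tm X.sig} {A : Ty S}
    (hM : HasTy X.sig Γ M A) : RdJ X Γ (Rd.toRd M) M M A := by
  induction hM with
  | var hn => exact RdJ.var hn
  | unit => exact RdJ.unit
  | pair h1 h2 ih1 ih2 => exact RdJ.pair ih1 ih2
  | fst h1 ih1 => exact RdJ.fst ih1
  | snd h1 ih1 => exact RdJ.snd ih1
  | lam h1 ih1 => exact RdJ.lam ih1
  | app h1 h2 ih1 ih2 => exact RdJ.app ih1 ih2
  | const h1 ih1 => exact RdJ.const ih1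

/-- Typing of left whiskering: if `Γ ⊢ M : A` and `Q n : Ms n ⟶ Ns n` then
`M[Q] : M[Ms] ⟶ M[Ns]`. -/
theorem RdJ.lw {X : Sig2 S} {Γ : List (Ty S)} {M : Tm X.sig} {A : Ty S}
    (hM : HasTy X.sig Γ M A) :
    ∀ {Δ : List (Ty S)} {Q : ℕ → Rd X.sig X.Rule} {Ms Ns : ℕ → Tm X.sig},
      (∀ n (hn : n < Γ.length), RdJ X Δ (Q n) (Ms n) (Ns n) (Γ.get ⟨n, hn⟩)) →
      RdJ X Δ (lw Q M) (M.sub Ms) (M.sub Ns) A := by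
  induction hM with
  | @var Γ n hn => intro Δ Q Ms Ns hQ; exact hQ n hn
  | unit => intro Δ Q Ms Ns hQ; exact RdJ.unit
  | pair h1 h2 ih1 ih2 => intro Δ Q Ms Ns hQ; exact RdJ.pair (ih1 hQ) (ih2 hQ)
  | fst h1 ih1 => intro Δ Q Ms Ns hQ; exact RdJ.fst (ih1 hQ)
  | snd h1 ih1 => intro Δ Q Ms Ns hQ; exact RdJ.snd (ih1 hQ)
  | @lam Γ M A B h1 ih1 =>
      intro Δ Q Ms Ns hQ
      refine RdJ.lam (ih1 ?_)
      intro n hn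
      cases n with
      | zero => exact RdJ.var (show 0 < (_ :: _ : List (Ty S)).length from Nat.succ_pos _)
      | succ n => exact (hQ n (Nat.lt_of_succ_lt_succ hn)).ren (RenOk.succ Δ A)
  | app h1 h2 ih1 ih2 => intro Δ Q Ms Ns hQ; exact RdJ.app (ih1 hQ) (ih2 hQ)
  | const h1 ih1 => intro Δ Q Ms Ns hQ; exact RdJ.const (fun i hi => ih1 i hi hQ)

end Aux

/-- In the 2-category `F(X,h)` constructed from an `L`-algebra `(X,h)`,
left whiskering computes as substitution: the horizontal composite
`id_N ∘ α = h((h N)⟨η(α)⟩)` equals `h(N[η(α)])`. -/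
theorem left_whiskering_is_substitution (X : Sig2 S)
    (h : List (Ty S) → Rd X.sig X.Rule → X.Rule)
    -- h respects permutation equivalence
    (hPEq : ∀ Γ P Q M N A, PEq X Γ P Q M N A → h Γ P = h Γ Q)
    -- the algebra law h ∘ L(h) = h ∘ μ
    (hAlg : ∀ Γ (T : Rd X.sig (LRule X)),
      h Γ (Rd.mapRule (fun R₀ => h R₀.ctx R₀.red) T) = h Γ (mu X T))
    -- the algebra law h ∘ η = id
    (hEta : ∀ r : X.Rule, h (X.ruleCtx r) (etaRd X r) = r)
    -- rules of X are well-typed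
    (hwt : ∀ r : X.Rule, HasTy X.sig (X.ruleCtx r) (X.lhs r) (X.ruleTy r) ∧
      HasTy X.sig (X.ruleCtx r) (X.rhs r) (X.ruleTy r))
    -- a 1-cell N : B → C and a 2-cell α : M ⟶ M' : A → B
    {A B C : Ty S} (N : Tm X.sig) (hN : HasTy X.sig [B] N C)
    (α : X.Rule) (hαc : X.ruleCtx α = [A]) (hαt : X.ruleTy α = B) :
    h [A] (Rd.rule (h [B] (Rd.toRd N)) (fun _ => etaRd X α)) =
      h [A] (lw (fun _ => etaRd X α) N) := by
  -- the unit reduction of `α` viewed over `L X`, and the rule for `id_N`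
  have hl : HasTy X.sig [A] (X.lhs α) B := by rw [← hαc, ← hαt]; exact (hwt α).1
  have hr : HasTy X.sig [A] (X.rhs α) B := by rw [← hαc, ← hαt]; exact (hwt α).2
  have ha0 : Rd.mapRule (fun R₀ => h R₀.ctx R₀.red)
      (Rd.rule (etaRule X α) (fun i => Rd.var i)) = etaRd X α := by
    show Rd.rule (h (X.ruleCtx α) (etaRd X α))
        (fun i => Rd.mapRule (fun R₀ : LRule X => h R₀.ctx R₀.red) (Rd.var i)) = etaRd X α
    rw [hEta α]
    rfl
  have hmua0 : mu X (Rd.rule (etaRule X α) (fun i => Rd.var i))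
      = Rd.vcomp (etaRd X α) (X.rhs α) (Rd.toRd (X.rhs α)) := by
    show Rd.vcomp (rw (fun i => Tm.var i) (etaRd X α))
        ((X.rhs α).sub (fun i => Tm.var i)) (lw (fun i => Rd.var i) (X.rhs α))
      = Rd.vcomp (etaRd X α) (X.rhs α) (Rd.toRd (X.rhs α))
    rw [Tm.sub_var, lw_var]
    rfl
  -- computing `μ` on the element `N⟨η(η(α))⟩` of `L (L X)`
  have hmuT : mu X (Rd.rule (⟨[B], Rd.toRd N, N, N, C⟩ : LRule X)
        (fun _ => Rd.rule (etaRule X α) (fun i => Rd.var i)))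
      = Rd.vcomp (Rd.toRd (N.sub (fun _ => X.lhs α))) (N.sub (fun _ => X.lhs α))
          (lw (fun _ => Rd.vcomp (etaRd X α) (X.rhs α) (Rd.toRd (X.rhs α))) N) := by
    show Rd.vcomp
        (rw (fun _ => srcRd X (mu X (Rd.rule (etaRule X α) (fun i => Rd.var i)))) (Rd.toRd N))
        (N.sub (fun _ => srcRd X (mu X (Rd.rule (etaRule X α) (fun i => Rd.var i)))))
        (lw (fun _ => mu X (Rd.rule (etaRule X α) (fun i => Rd.var i))) N) = _
    rw [hmua0]
    have hsrc : srcRd X (Rd.vcomp (etaRd X α) (X.rhs α) (Rd.toRd (X.rhs α))) = X.lhs α := by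
      show (X.lhs α).sub (fun i => Tm.var i) = X.lhs α
      exact Tm.sub_var _
    rw [hsrc, rw_toRd]
  have hmapT : Rd.mapRule (fun R₀ => h R₀.ctx R₀.red)
      (Rd.rule (⟨[B], Rd.toRd N, N, N, C⟩ : LRule X)
        (fun _ => Rd.rule (etaRule X α) (fun i => Rd.var i)))
      = Rd.rule (h [B] (Rd.toRd N)) (fun _ => etaRd X α) := by
    show Rd.rule (h [B] (Rd.toRd N))
        (fun _ => Rd.mapRule (fun R₀ : LRule X => h R₀.ctx R₀.red)
          (Rd.rule (etaRule X α) (fun i => Rd.var i))) = _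
    rw [ha0]
  have hmapT' : Rd.mapRule (fun R₀ => h R₀.ctx R₀.red)
      (lw (fun _ => Rd.rule (etaRule X α) (fun i => Rd.var i)) N)
      = lw (fun _ => etaRd X α) N := by
    rw [mapRule_lw, ha0]
  have hmuT' : mu X (lw (fun _ => Rd.rule (etaRule X α) (fun i => Rd.var i)) N)
      = lw (fun _ => Rd.vcomp (etaRd X α) (X.rhs α) (Rd.toRd (X.rhs α))) N := by
    rw [mu_lw, hmua0]
  -- typing of the pieces
  have r1 : RdJ X [A] (etaRd X α) (X.lhs α) (X.rhs α) B := by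
    have hlα := RdJ.rule (X := X) (Γ := [A]) (r := α) (args := fun i => Rd.var i)
        (Ms := fun i => Tm.var i) (Ns := fun i => Tm.var i) ?_
    · rw [Tm.sub_var, Tm.sub_var, hαt] at hlα
      exact hlα
    · intro i hi
      obtain ⟨hi', e⟩ := get_congr hαc hi
      rw [e]
      exact RdJ.var hi'
  have rQ : RdJ X [A] (Rd.vcomp (etaRd X α) (X.rhs α) (Rd.toRd (X.rhs α)))
      (X.lhs α) (X.rhs α) B :=
    RdJ.vcomp r1 (RdJ.toRd hr)
  have rP0 : RdJ X [A]
      (lw (fun _ => Rd.vcomp (etaRd X α) (X.rhs α) (Rd.toRd (X.rhs α))) N)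
      (N.sub (fun _ => X.lhs α)) (N.sub (fun _ => X.rhs α)) C := by
    refine RdJ.lw hN ?_
    intro n hn
    have : n = 0 := Nat.lt_one_iff.mp hn
    subst this
    exact rQ
  -- assembling via the algebra law applied twice and the left unit law
  calc h [A] (Rd.rule (h [B] (Rd.toRd N)) (fun _ => etaRd X α))
      = h [A] (Rd.mapRule (fun R₀ => h R₀.ctx R₀.red)
          (Rd.rule (⟨[B], Rd.toRd N, N, N, C⟩ : LRule X)
            (fun _ => Rd.rule (etaRule X α) (fun i => Rd.var i)))) := by rw [hmapT]
    _ = h [A] (mu X (Rd.rule (⟨[B], Rd.toRd N, N, N, C⟩ : LRule X)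
            (fun _ => Rd.rule (etaRule X α) (fun i => Rd.var i)))) := hAlg [A] _
    _ = h [A] (Rd.vcomp (Rd.toRd (N.sub (fun _ => X.lhs α))) (N.sub (fun _ => X.lhs α))
          (lw (fun _ => Rd.vcomp (etaRd X α) (X.rhs α) (Rd.toRd (X.rhs α))) N)) := by
            rw [hmuT]
    _ = h [A] (lw (fun _ => Rd.vcomp (etaRd X α) (X.rhs α) (Rd.toRd (X.rhs α))) N) :=
          hPEq _ _ _ _ _ _ (PEq.unitL rP0)
    _ = h [A] (mu X (lw (fun _ => Rd.rule (etaRule X α) (fun i => Rd.var i)) N)) := by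
          rw [hmuT']
    _ = h [A] (Rd.mapRule (fun R₀ => h R₀.ctx R₀.red)
          (lw (fun _ => Rd.rule (etaRule X α) (fun i => Rd.var i)) N)) :=
          (hAlg [A] _).symm
    _ = h [A] (lw (fun _ => etaRd X α) N) := by rw [hmapT']
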